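/- arXiv:1708.07653 — 4 statements merged into one kernel-verified Lean document; each statement's English description precedes it below -/
import Mathlib

section
/- Let X be a finite set (of 'crossings'), E a finite set (of 'edges'), and r : X → E × E a map assigning to each crossing an unordered pair of distinct responsible edges. Fix k ≥ 1. There exists an assignment f : X → E with f(x) ∈ {(r x).1, (r x).2} for all x, such that every e ∈ E has |f⁻¹(e)| ≤ k, if and only if for every subset E' ⊆ E, the number of crossings both of whose responsible edges lie in E' is at most k·|E'|. -/
/-- Characterization of `k`-gap assignments: with `X` a finite set of crossings,
`E` a finite set of edges, and `r : X → E × E` assigning to each crossing its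
two distinct responsible edges, there is an assignment `f : X → E` choosing a
responsible edge for each crossing with every fiber of size at most `k`
if and only if for every subset `E'` of edges, the number of crossings both of
whose responsible edges lie in `E'` is at most `k·|E'|`. -/
theorem stmt1 {X E : Type*} [Finite X] [Finite E] [DecidableEq E] (k : ℕ) (hk : 1 ≤ k)
    (r : X → E × E) (hr : ∀ x : X, (r x).1 ≠ (r x).2) :
    (∃ f : X → E, (∀ x : X, f x = (r x).1 ∨ f x = (r x).2) ∧
        ∀ e : E, Nat.card {x : X // f x = e} ≤ k) ↔
      (∀ E' : Finset E,
        Nat.card {x : X // (r x).1 ∈ E' ∧ (r x).2 ∈ E'} ≤ k * E'.card) := by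
  classical
  have : Fintype X := Fintype.ofFinite X
  have : Fintype E := Fintype.ofFinite E
  constructor
  · rintro ⟨f, hf1, hf2⟩ E'
    have hcard : Nat.card {x : X // (r x).1 ∈ E' ∧ (r x).2 ∈ E'} =
        (Finset.univ.filter (fun x : X => (r x).1 ∈ E' ∧ (r x).2 ∈ E')).card := by
      rw [Nat.card_eq_fintype_card, Fintype.card_subtype]
    rw [hcard]
    have hsub : (Finset.univ.filter (fun x : X => (r x).1 ∈ E' ∧ (r x).2 ∈ E')) ⊆
        E'.biUnion (fun e => Finset.univ.filter (fun x : X => f x = e)) := by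
      intro x hx
      simp only [Finset.mem_filter, Finset.mem_univ, true_and] at hx
      rw [Finset.mem_biUnion]
      rcases hf1 x with h | h
      · exact ⟨(r x).1, hx.1, by simp [h]⟩
      · exact ⟨(r x).2, hx.2, by simp [h]⟩
    calc (Finset.univ.filter (fun x : X => (r x).1 ∈ E' ∧ (r x).2 ∈ E')).card
        ≤ (E'.biUnion (fun e => Finset.univ.filter (fun x : X => f x = e))).card :=
          Finset.card_le_card hsub
      _ ≤ ∑ e ∈ E', (Finset.univ.filter (fun x : X => f x = e)).card :=
          Finset.card_biUnion_le
      _ ≤ ∑ _e ∈ E', k := by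
          refine Finset.sum_le_sum fun e _ => ?_
          have := hf2 e
          rwa [Nat.card_eq_fintype_card, Fintype.card_subtype] at this
      _ = k * E'.card := by rw [Finset.sum_const, smul_eq_mul, mul_comm]
  · intro h
    set t : X → Finset (E × Fin k) :=
      fun x => ({(r x).1, (r x).2} : Finset E) ×ˢ Finset.univ with ht
    have hall : ∀ s : Finset X, s.card ≤ (s.biUnion t).card := by
      intro s
      set ES : Finset E := s.biUnion (fun x => {(r x).1, (r x).2}) with hES
      have hbu : s.biUnion t = ES ×ˢ (Finset.univ : Finset (Fin k)) := by
        ext ⟨e, i⟩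
        simp only [ht, hES, Finset.mem_biUnion, Finset.mem_product, Finset.mem_univ,
          and_true]
      rw [hbu, Finset.card_product, Finset.card_univ, Fintype.card_fin]
      have hs : s ⊆ Finset.univ.filter (fun x : X => (r x).1 ∈ ES ∧ (r x).2 ∈ ES) := by
        intro x hx
        simp only [Finset.mem_filter, Finset.mem_univ, true_and, hES, Finset.mem_biUnion]
        exact ⟨⟨x, hx, by simp⟩, ⟨x, hx, by simp⟩⟩
      calc s.card ≤ (Finset.univ.filter
            (fun x : X => (r x).1 ∈ ES ∧ (r x).2 ∈ ES)).card := Finset.card_le_card hs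
        _ ≤ k * ES.card := by
            have := h ES
            rwa [Nat.card_eq_fintype_card, Fintype.card_subtype] at this
        _ = ES.card * k := mul_comm _ _
    obtain ⟨g, hginj, hgt⟩ := (Finset.all_card_le_biUnion_card_iff_exists_injective t).mp hall
    refine ⟨fun x => (g x).1, fun x => ?_, fun e => ?_⟩
    · have := hgt x
      simp only [ht, Finset.mem_product, Finset.mem_insert, Finset.mem_singleton] at this
      exact this.1
    · have hinj : Function.Injective
          (fun p : {x : X // (g x).1 = e} => (g p.1).2) := by
        rintro ⟨x, hx⟩ ⟨y, hy⟩ hxy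
        simp only at hxy
        have : g x = g y := Prod.ext (hx.trans hy.symm) hxy
        exact Subtype.ext (hginj this)
      calc Nat.card {x : X // (g x).1 = e} ≤ Nat.card (Fin k) :=
            Nat.card_le_card_of_injective _ hinj
        _ = k := Nat.card_eq_fintype_card.trans (Fintype.card_fin k)
end

section
/- A finite graph admits an orientation of its edges in which every vertex has in-degree at most k if and only if every subgraph has at most k times as many edges as vertices (equivalently, every subgraph has average degree at most 2k). -/
set_option maxHeartbeats 1000000
open scoped Classical

/-- Hakimi's theorem: a finite graph admits an orientation (a choice of head
for each edge) in which every vertex has in-degree at most `k` if and only if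
every subgraph (equivalently, every vertex subset `S`, with the edges inside
`S`) has at most `k` times as many edges as vertices. -/
theorem stmt2 {V : Type*} [Fintype V] [DecidableEq V]
    (G : SimpleGraph V) [DecidableRel G.Adj] (k : ℕ) :
    (∃ head : Sym2 V → V,
        (∀ e ∈ G.edgeFinset, head e ∈ e) ∧
        ∀ v : V, (G.edgeFinset.filter (fun e => head e = v)).card ≤ k) ↔
      (∀ S : Finset V,
        (G.edgeFinset.filter (fun e => ∀ v ∈ e, v ∈ S)).card ≤ k * S.card) := by
  constructor
  · rintro ⟨head, hmem, hdeg⟩ S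
    calc (G.edgeFinset.filter (fun e => ∀ v ∈ e, v ∈ S)).card
        ≤ (S.biUnion (fun v => G.edgeFinset.filter (fun e => head e = v))).card := by
          apply Finset.card_le_card
          intro e he
          simp only [Finset.mem_filter] at he
          exact Finset.mem_biUnion.2 ⟨head e, he.2 _ (hmem e he.1),
            Finset.mem_filter.2 ⟨he.1, rfl⟩⟩
      _ ≤ ∑ v ∈ S, (G.edgeFinset.filter (fun e => head e = v)).card :=
          Finset.card_biUnion_le
      _ ≤ ∑ _v ∈ S, k := Finset.sum_le_sum (fun v _ => hdeg v)
      _ = k * S.card := by rw [Finset.sum_const, smul_eq_mul, mul_comm]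
  · intro hsub
    set t : {e : Sym2 V // e ∈ G.edgeFinset} → Finset (V × Fin k) :=
      fun e => (Finset.univ.filter (fun v => v ∈ e.val)) ×ˢ Finset.univ with ht
    have hall : ∀ s : Finset {e : Sym2 V // e ∈ G.edgeFinset},
        s.card ≤ (s.biUnion t).card := by
      intro s
      set S : Finset V := s.biUnion (fun e => Finset.univ.filter (fun v => v ∈ e.val))
        with hS
      have hbu : s.biUnion t = S ×ˢ (Finset.univ : Finset (Fin k)) := by
        ext ⟨v, i⟩
        simp only [Finset.mem_biUnion, ht, Finset.mem_product, Finset.mem_filter,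
          Finset.mem_univ, true_and, and_true, hS]
      have h1 : s.card ≤ (G.edgeFinset.filter (fun e => ∀ v ∈ e, v ∈ S)).card := by
        apply Finset.card_le_card_of_injOn (fun e => e.val)
        · intro e he
          refine Finset.mem_filter.2 ⟨e.2, fun v hv => ?_⟩
          exact Finset.mem_biUnion.2 ⟨e, he, Finset.mem_filter.2 ⟨Finset.mem_univ _, hv⟩⟩
        · intro a _ b _ hab
          exact Subtype.ext hab
      calc s.card ≤ k * S.card := h1.trans (hsub S)
        _ = (s.biUnion t).card := by
            rw [hbu, Finset.card_product, Finset.card_univ, Fintype.card_fin, mul_comm]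
    obtain ⟨f, hfinj, hft⟩ := (Finset.all_card_le_biUnion_card_iff_exists_injective t).1 hall
    refine ⟨fun e => if h : e ∈ G.edgeFinset then (f ⟨e, h⟩).1 else (Quot.out e).1, ?_, ?_⟩
    · intro e he
      simp only [dif_pos he]
      have := hft ⟨e, he⟩
      simp only [ht, Finset.mem_product, Finset.mem_filter] at this
      exact this.1.2
    · intro v
      have : ∀ e ∈ G.edgeFinset.filter (fun e =>
          (if h : e ∈ G.edgeFinset then (f ⟨e, h⟩).1 else (Quot.out e).1) = v),
          ∀ h : e ∈ G.edgeFinset, (f ⟨e, h⟩).1 = v := by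
        intro e he h
        simp only [Finset.mem_filter, dif_pos h] at he
        exact he.2
      set Fl := G.edgeFinset.filter (fun e =>
          (if h : e ∈ G.edgeFinset then (f ⟨e, h⟩).1 else (Quot.out e).1) = v) with hFl
      have hg : Function.Injective (fun e : {e // e ∈ Fl} =>
          (f ⟨e.val, (Finset.mem_filter.1 e.2).1⟩).2) := by
        intro a b hab
        have haG : a.val ∈ G.edgeFinset := (Finset.mem_filter.1 a.2).1
        have hbG : b.val ∈ G.edgeFinset := (Finset.mem_filter.1 b.2).1
        have hfa : f ⟨a.val, haG⟩ = f ⟨b.val, hbG⟩ := by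
          have h1 := this a.val a.2 haG
          have h2 := this b.val b.2 hbG
          exact Prod.ext (h1.trans h2.symm) hab
        have h3 : (⟨a.val, haG⟩ : {e // e ∈ G.edgeFinset}) = ⟨b.val, hbG⟩ := hfinj hfa
        have hval : a.val = b.val := Subtype.mk_eq_mk.1 h3
        exact Subtype.ext hval
      calc Fl.card = Fintype.card {e // e ∈ Fl} := (Fintype.card_coe Fl).symm
        _ ≤ Fintype.card (Fin k) := Fintype.card_le_of_injective _ hg
        _ = k := Fintype.card_fin k
end

section
/- Every graph drawn in the plane with at most 2k crossings per edge (a 2k-planar drawing) admits an assignment of each crossing to one of its two responsible edges such that each edge is assigned at most k crossings. Abstractly: if X is a finite set, E a finite set, r : X → Sym²(E) assigns distinct responsible pairs, and each e ∈ E is responsible for at most 2k elements of X, then there is a choice f : X → E with f(x) a responsible edge of x and |f⁻¹(e)| ≤ k for every e. -/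
/-- Lemma 4.4 (abstract form): every `2k`-planar drawing is `k`-gap-planar.
If `X` is a finite set of crossings, `E` a finite set of edges,
`r : X → Sym2 E` assigns to each crossing its (non-diagonal) pair of
responsible edges, and each edge is responsible for at most `2k` crossings,
then there is a choice `f : X → E` of a responsible edge for each crossing
such that every edge is chosen at most `k` times. -/
theorem stmt9 {X E : Type*} [Finite X] [Finite E] (k : ℕ) (hk : 1 ≤ k)
    (r : X → Sym2 E) (hr : ∀ x : X, ¬ (r x).IsDiag)
    (hdeg : ∀ e : E, Nat.card {x : X // e ∈ r x} ≤ 2 * k) :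
    ∃ f : X → E, (∀ x : X, f x ∈ r x) ∧
      ∀ e : E, Nat.card {x : X // f x = e} ≤ k := by
  classical
  haveI : Fintype X := Fintype.ofFinite X
  haveI : Fintype E := Fintype.ofFinite E
  -- bipartite sets: crossing x can go to any copy (e, i) with e ∈ r x
  set t : X → Finset (E × Fin k) :=
    fun x => (Finset.univ.filter (fun e => e ∈ r x)) ×ˢ Finset.univ with ht
  have hall : ∀ s : Finset X, s.card ≤ (s.biUnion t).card := by
    intro s
    -- edges touched by s
    set A : Finset E := s.biUnion (fun x => Finset.univ.filter (fun e => e ∈ r x)) with hA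
    have hbi : s.biUnion t = A ×ˢ (Finset.univ : Finset (Fin k)) := by
      ext ⟨e, i⟩
      simp [ht, hA, Finset.mem_biUnion, Finset.mem_product]
    -- double counting
    have hdouble :
        (∑ x ∈ s, (A.filter (fun e => e ∈ r x)).card)
          = ∑ e ∈ A, (s.filter (fun x => e ∈ r x)).card := by
      simp only [Finset.card_filter]
      exact Finset.sum_comm
    have hlow : 2 * s.card ≤ ∑ x ∈ s, (A.filter (fun e => e ∈ r x)).card := by
      have : ∀ x ∈ s, 2 ≤ (A.filter (fun e => e ∈ r x)).card := by
        intro x hx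
        obtain ⟨a, b, hrx⟩ : ∃ a b, r x = s(a, b) :=
          Sym2.inductionOn (r x) fun a b => ⟨a, b, rfl⟩
        have hab : a ≠ b := by
          have := hr x; rw [hrx] at this; simpa [Sym2.isDiag_iff_proj_eq] using this
        have ha' : a ∈ r x := by rw [hrx]; exact Sym2.mem_mk_left a b
        have hb' : b ∈ r x := by rw [hrx]; exact Sym2.mem_mk_right a b
        have ha : a ∈ A.filter (fun e => e ∈ r x) :=
          Finset.mem_filter.mpr ⟨Finset.mem_biUnion.mpr ⟨x, hx, by simp [ha']⟩, ha'⟩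
        have hb : b ∈ A.filter (fun e => e ∈ r x) :=
          Finset.mem_filter.mpr ⟨Finset.mem_biUnion.mpr ⟨x, hx, by simp [hb']⟩, hb'⟩
        have : 1 < (A.filter (fun e => e ∈ r x)).card :=
          Finset.one_lt_card.mpr ⟨a, ha, b, hb, hab⟩
        omega
      calc 2 * s.card = ∑ _x ∈ s, 2 := by simp [mul_comm]
        _ ≤ _ := Finset.sum_le_sum this
    have hhigh : ∑ e ∈ A, (s.filter (fun x => e ∈ r x)).card ≤ A.card * (2 * k) := by
      have : ∀ e ∈ A, (s.filter (fun x => e ∈ r x)).card ≤ 2 * k := by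
        intro e _
        have h1 : (s.filter (fun x => e ∈ r x)).card
            ≤ (Finset.univ.filter (fun x => e ∈ r x)).card :=
          Finset.card_le_card (fun x hx => by
            simp only [Finset.mem_filter] at *; exact ⟨Finset.mem_univ x, hx.2⟩)
        have h2 : (Finset.univ.filter (fun x : X => e ∈ r x)).card
            = Nat.card {x : X // e ∈ r x} := by
          rw [Nat.card_eq_fintype_card, Fintype.card_subtype]
        have h3 := hdeg e
        omega
      calc ∑ e ∈ A, (s.filter (fun x => e ∈ r x)).card
          ≤ ∑ _e ∈ A, 2 * k := Finset.sum_le_sum this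
        _ = A.card * (2 * k) := by simp [mul_comm]
    have hcard : (s.biUnion t).card = A.card * k := by
      rw [hbi, Finset.card_product]; simp
    have : 2 * s.card ≤ A.card * (2 * k) := by
      calc 2 * s.card ≤ _ := hlow
        _ = _ := hdouble
        _ ≤ _ := hhigh
    rw [hcard]; nlinarith
  obtain ⟨g, hginj, hgmem⟩ := (Finset.all_card_le_biUnion_card_iff_exists_injective t).mp hall
  refine ⟨fun x => (g x).1, ?_, ?_⟩
  · intro x
    have := hgmem x
    simp only [ht, Finset.mem_product, Finset.mem_filter] at this
    exact this.1.2
  · intro e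
    have hinj : Function.Injective (fun x : {x : X // (g x).1 = e} => (g x.1).2) := by
      rintro ⟨x, hx⟩ ⟨y, hy⟩ h
      simp only at h
      have : g x = g y := by
        apply Prod.ext <;> simp [hx, hy, h]
      exact Subtype.ext (hginj this)
    calc Nat.card {x : X // (g x).1 = e} = Fintype.card {x : X // (g x).1 = e} :=
          Nat.card_eq_fintype_card
      _ ≤ Fintype.card (Fin k) := Fintype.card_le_of_injective _ hinj
      _ = k := Fintype.card_fin k
end

section
/- Let Γ be a drawing of a graph G in which each crossing can be assigned to one of its two responsible edges with at most k assignments per edge (a k-gap-planar drawing). Then Γ contains no family of 2k + 2 pairwise crossing edges. Abstractly: if F is a set of 2k+2 edges that pairwise cross, the subdrawing on F has at least C(2k+2, 2) = (2k+2)(2k+1)/2 crossings, which exceeds k·(2k+2); this contradicts the bound of at most k crossings charged per edge. -/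
/-- Lemma 4.2 (counting form): in a `k`-gap-planar drawing (crossings `X`,
responsibility map `r : X → Sym2 E`, and an assignment `f` of each crossing to
a responsible edge with at most `k` crossings per edge), there is no family of
`2k + 2` pairwise crossing edges: any finite set `F` of edges such that every
two distinct edges of `F` cross (i.e. some crossing has exactly that pair of
responsible edges) satisfies `|F| ≤ 2k + 1`. -/
theorem stmt18 {X E : Type*} [Finite X] [DecidableEq E] (k : ℕ)
    (r : X → Sym2 E) (f : X → E) (hf : ∀ x : X, f x ∈ r x)
    (hk : ∀ e : E, Nat.card {x : X // f x = e} ≤ k)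
    (F : Finset E)
    (hcross : ∀ e ∈ F, ∀ e' ∈ F, e ≠ e' → ∃ x : X, r x = s(e, e')) :
    F.card ≤ 2 * k + 1 := by
  classical
  rcases isEmpty_or_nonempty X with hX | hX
  · -- no crossings: F has at most one element
    have h1 : F.card ≤ 1 := by
      rw [Finset.card_le_one]
      intro a ha b hb
      by_contra hne
      obtain ⟨x, -⟩ := hcross a ha b hb hne
      exact hX.elim x
    omega
  cases nonempty_fintype X
  set n := F.card with hn
  -- choose a crossing for each ordered pair of distinct edges of F
  have hchoice : ∀ p ∈ F.offDiag, ∃ x : X, r x = s(p.1, p.2) := by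
    rintro ⟨a, b⟩ hp
    rw [Finset.mem_offDiag] at hp
    exact hcross a hp.1 b hp.2.1 hp.2.2
  choose g hg using hchoice
  -- the image of g lies in the set of crossings assigned to an edge of F
  set T : Finset X := Finset.univ.filter (fun x => f x ∈ F) with hT
  have himg : ∀ p (hp : p ∈ F.offDiag), g p hp ∈ T := by
    intro p hp
    simp only [hT, Finset.mem_filter, Finset.mem_univ, true_and]
    have := hf (g p hp)
    rw [hg p hp, Sym2.mem_iff] at this
    rw [Finset.mem_offDiag] at hp
    rcases this with h | h <;> rw [h]
    · exact hp.1
    · exact hp.2.1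
  -- g has fibers of size at most 2
  have hcard1 : F.offDiag.card ≤ 2 * T.card := by
    have := Finset.card_le_mul_card_image_of_maps_to
      (f := fun p : E × E => if hp : p ∈ F.offDiag then g p hp else Classical.arbitrary X)
      (s := F.offDiag) (t := T) ?_ 2 ?_
    · exact this
    · intro p hp
      simp only [hp, dif_pos]
      exact himg p hp
    · intro x hx
      -- fiber over x: pairs p with g p = x, so s(p.1,p.2) = r x, at most 2 pairs
      obtain ⟨⟨a, b⟩, hab⟩ := Quot.exists_rep (r x)
      have hab : r x = s(a, b) := hab.symm
      have : F.offDiag.filter (fun p => (if hp : p ∈ F.offDiag then g p hp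
          else Classical.arbitrary X) = x) ⊆ {(a, b), (b, a)} := by
        intro p hp
        simp only [Finset.mem_filter] at hp
        obtain ⟨hp1, hp2⟩ := hp
        rw [dif_pos hp1] at hp2
        have hr : s(p.1, p.2) = s(a, b) := by rw [← hg p hp1, hp2, ← hab]
        rw [Sym2.eq_iff] at hr
        simp only [Finset.mem_insert, Finset.mem_singleton, Prod.ext_iff]
        tauto
      calc _ ≤ ({(a, b), (b, a)} : Finset (E × E)).card := Finset.card_le_card this
        _ ≤ 2 := Finset.card_insert_le _ _ |>.trans (by simp)
  -- |T| ≤ k * n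
  have hcard2 : T.card ≤ k * n := by
    have hT2 : T = F.biUnion (fun e => Finset.univ.filter (fun x => f x = e)) := by
      ext x
      simp [hT, Finset.mem_biUnion]
    rw [hT2]
    calc (F.biUnion _).card ≤ ∑ e ∈ F, (Finset.univ.filter (fun x => f x = e)).card :=
          Finset.card_biUnion_le
      _ ≤ ∑ e ∈ F, k := by
          refine Finset.sum_le_sum fun e _ => ?_
          have := hk e
          rwa [Nat.card_eq_fintype_card, Fintype.card_subtype] at this
      _ = k * n := by rw [Finset.sum_const, smul_eq_mul, mul_comm]
  have hoff : F.offDiag.card = n * n - n := Finset.offDiag_card F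
  have key : n * n - n ≤ 2 * (k * n) := by
    rw [← hoff]; exact hcard1.trans (Nat.mul_le_mul_left 2 hcard2)
  have key2 : n * n ≤ (2 * k + 1) * n := by
    have : (2 * k + 1) * n = 2 * (k * n) + n := by ring
    omega
  rcases Nat.eq_zero_or_pos n with h0 | h0
  · omega
  · exact Nat.le_of_mul_le_mul_right key2 h0
end
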